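/- arXiv:1609.05341 — 3 statements merged into one kernel-verified Lean document; each statement's English description precedes it below -/
import Mathlib

section
/- If there exists a positive definite matrix P satisfying A P A^T + Q = P with Q positive definite, then A is Schur stable: every eigenvalue of A has modulus strictly less than 1. -/
open Matrix

lemma re_quad_pos (p : ℕ) (P : Matrix (Fin p) (Fin p) ℝ) (hP : P.PosDef) (w : Fin p → ℂ)
    (hw : w ≠ 0) : 0 < (star w ⬝ᵥ (P.map Complex.ofReal) *ᵥ w).re := by
  set a : Fin p → ℝ := fun i => (w i).re
  set b : Fin p → ℝ := fun i => (w i).im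
  have key : (star w ⬝ᵥ (P.map Complex.ofReal) *ᵥ w).re
      = a ⬝ᵥ P *ᵥ a + b ⬝ᵥ P *ᵥ b := by
    simp only [dotProduct, mulVec, Pi.star_apply, map_apply, Finset.mul_sum, Complex.re_sum]
    rw [← Finset.sum_add_distrib]
    refine Finset.sum_congr rfl fun i _ => ?_
    rw [← Finset.sum_add_distrib]
    refine Finset.sum_congr rfl fun j _ => ?_
    simp [Complex.mul_re, a, b]
  rw [key]
  have ha : ∀ x : Fin p → ℝ, 0 ≤ x ⬝ᵥ P *ᵥ x := fun x => by
    have := hP.posSemidef.dotProduct_mulVec_nonneg x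
    simpa using this
  have hab : a ≠ 0 ∨ b ≠ 0 := by
    by_contra h
    push_neg at h
    apply hw
    funext i
    exact Complex.ext (by simpa [a] using congrFun h.1 i) (by simpa [b] using congrFun h.2 i)
  rcases hab with h | h
  · have : 0 < a ⬝ᵥ P *ᵥ a := by simpa using hP.dotProduct_mulVec_pos h
    linarith [ha b]
  · have : 0 < b ⬝ᵥ P *ᵥ b := by simpa using hP.dotProduct_mulVec_pos h
    linarith [ha a]

/-- If there exists a positive definite `P` with `A P Aᵀ + Q = P` for a
positive definite `Q`, then `A` is Schur stable: every complex eigenvalue of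
`A` has modulus strictly less than one. -/
theorem schur_stable_of_lyapunov (p : ℕ) (A Q : Matrix (Fin p) (Fin p) ℝ)
    (hQ : Q.PosDef)
    (hP : ∃ P : Matrix (Fin p) (Fin p) ℝ, P.PosDef ∧ A * P * Aᵀ + Q = P) :
    ∀ μ ∈ spectrum ℂ (A.map (algebraMap ℝ ℂ)), ‖μ‖ < 1 := by
  obtain ⟨P, hPpd, hLyap⟩ := hP
  intro μ hμ
  set M : Matrix (Fin p) (Fin p) ℂ := A.map (algebraMap ℝ ℂ) with hM
  -- get eigenvector of Mᵀ
  have hdet : (algebraMap ℂ (Matrix (Fin p) (Fin p) ℂ) μ - M).det = 0 := by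
    rw [spectrum.mem_iff] at hμ
    by_contra h
    exact hμ ((isUnit_iff_isUnit_det _).2 (isUnit_iff_ne_zero.2 h))
  have hdetT : (algebraMap ℂ (Matrix (Fin p) (Fin p) ℂ) μ - Mᵀ).det = 0 := by
    rw [← Matrix.det_transpose]
    convert hdet using 2
    rw [Matrix.transpose_sub, Matrix.transpose_transpose]
    congr 1
    rw [Matrix.algebraMap_eq_diagonal, Matrix.diagonal_transpose]
  obtain ⟨w, hw0, hweq⟩ := (Matrix.exists_mulVec_eq_zero_iff).2 hdetT
  have heig : Mᵀ *ᵥ w = μ • w := by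
    have : (algebraMap ℂ (Matrix (Fin p) (Fin p) ℂ) μ - Mᵀ) *ᵥ w = 0 := hweq
    rw [Matrix.sub_mulVec] at this
    have h2 : algebraMap ℂ (Matrix (Fin p) (Fin p) ℂ) μ *ᵥ w = μ • w := by
      rw [Matrix.algebraMap_eq_diagonal]
      ext i
      simp [mulVec_diagonal]
    rw [h2] at this
    linear_combination (norm := module) -this
  -- complexified matrices
  set f := algebraMap ℝ ℂ
  set Pc := P.map f
  set Qc := Q.map f
  have hLyapC : M * Pc * Mᵀ + Qc = Pc := by
    have := congrArg (fun X : Matrix (Fin p) (Fin p) ℝ => X.map f) hLyap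
    simpa [Matrix.map_add, Matrix.map_mul, Matrix.transpose_map, hM, Pc, Qc] using this
  -- M is "real": star w ᵥ* M = star (Mᵀ *ᵥ w)
  have hMH : Mᴴ = Mᵀ := by
    ext i j
    simp [conjTranspose_apply, M, Complex.conj_ofReal, f]
  have hvecMul : star w ᵥ* M = (starRingEnd ℂ μ) • star w := by
    have : star (star w ᵥ* M) = Mᴴ *ᵥ star (star w) := Matrix.star_vecMul _ _
    rw [star_star, hMH, heig] at this
    calc star w ᵥ* M = star (star (star w ᵥ* M)) := (star_star _).symm
      _ = star (μ • w) := by rw [this]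
      _ = (starRingEnd ℂ μ) • star w := by rw [star_smul]; rfl
  -- quadratic forms
  have hquad : star w ⬝ᵥ (M * Pc * Mᵀ) *ᵥ w
      = (Complex.normSq μ : ℂ) * (star w ⬝ᵥ Pc *ᵥ w) := by
    rw [← Matrix.mulVec_mulVec, ← Matrix.mulVec_mulVec, heig, Matrix.mulVec_smul, Matrix.mulVec_smul,
      dotProduct_smul, Matrix.dotProduct_mulVec, hvecMul, smul_dotProduct]
    rw [← Complex.mul_conj, smul_eq_mul, smul_eq_mul]
    ring
  have hsum := congrArg (fun X : Matrix (Fin p) (Fin p) ℂ => star w ⬝ᵥ X *ᵥ w) hLyapC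
  simp only [Matrix.add_mulVec, dotProduct_add] at hsum
  rw [hquad] at hsum
  have hre := congrArg Complex.re hsum
  rw [Complex.add_re, Complex.re_ofReal_mul] at hre
  have hPpos : 0 < (star w ⬝ᵥ Pc *ᵥ w).re := re_quad_pos p P hPpd w hw0
  have hQpos : 0 < (star w ⬝ᵥ Qc *ᵥ w).re := re_quad_pos p Q hQ w hw0
  have hlt : Complex.normSq μ < 1 := by
    nlinarith
  have : ‖μ‖ ^ 2 < 1 := by rw [Complex.sq_norm]; exact hlt
  nlinarith [norm_nonneg μ]
end

section
/- Let f: ℝ^d → ℝ be differentiable with L-Lipschitz gradient (L > 0), let c > L, and given x define x⁺ as any minimizer over a nonempty closed set T of y ↦ (c/2)‖y − (x − (1/c)∇f(x))‖². Then f(x⁺) ≤ f(x) − ((c − L)/2)‖x⁺ − x‖² when x ∈ T. -/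
open scoped RealInnerProductSpace

lemma descent_lemma {d : ℕ} (f : EuclideanSpace ℝ (Fin d) → ℝ)
    (hdiff : Differentiable ℝ f) (L : ℝ) (hL : 0 ≤ L)
    (hlip : ∀ x y : EuclideanSpace ℝ (Fin d),
      ‖gradient f x - gradient f y‖ ≤ L * ‖x - y‖)
    (x y : EuclideanSpace ℝ (Fin d)) :
    f y ≤ f x + ⟪gradient f x, y - x⟫ + L / 2 * ‖y - x‖ ^ 2 := by
  set v := y - x with hv
  -- φ t = f (x + t • v)
  have hderiv : ∀ t : ℝ, HasDerivAt (fun t : ℝ => f (x + t • v))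
      ⟪gradient f (x + t • v), v⟫ t := by
    intro t
    have h1 : HasFDerivAt f (InnerProductSpace.toDual ℝ _ (gradient f (x + t • v)))
        (x + t • v) := (hdiff _).hasGradientAt.hasFDerivAt
    have h2 : HasDerivAt (fun t : ℝ => x + t • v) v t := by
      simpa using ((hasDerivAt_id t).smul_const v).const_add x
    simpa [InnerProductSpace.toDual_apply_apply, Function.comp_def] using (h1.comp_hasDerivAt t h2)
  have hgcont : Continuous (gradient f) := by
    refine (LipschitzWith.of_dist_le_mul (K := ⟨L, hL⟩) ?_).continuous
    intro a b; rw [dist_eq_norm, dist_eq_norm]; exact hlip a b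
  have hcont : Continuous fun t : ℝ => ⟪gradient f (x + t • v), v⟫ := by
    exact (hgcont.comp (continuous_const.add (continuous_id.smul continuous_const))).inner continuous_const
  have key : f (x + (1:ℝ) • v) - f (x + (0:ℝ) • v)
      = ∫ t in (0:ℝ)..1, ⟪gradient f (x + t • v), v⟫ := by
    rw [intervalIntegral.integral_eq_sub_of_hasDerivAt
      (fun t _ => hderiv t) (hcont.intervalIntegrable 0 1)]
  have hbound : ∀ t ∈ Set.Icc (0:ℝ) 1,
      ⟪gradient f (x + t • v), v⟫ ≤ ⟪gradient f x, v⟫ + L * t * ‖v‖ ^ 2 := by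
    intro t ht
    have h1 : ⟪gradient f (x + t • v) - gradient f x, v⟫
        ≤ ‖gradient f (x + t • v) - gradient f x‖ * ‖v‖ :=
      real_inner_le_norm _ _
    have h2 : ‖gradient f (x + t • v) - gradient f x‖ ≤ L * (t * ‖v‖) := by
      have := hlip (x + t • v) x
      simpa [norm_smul, abs_of_nonneg ht.1, mul_assoc] using this
    have h3 : ⟪gradient f (x + t • v) - gradient f x, v⟫ ≤ L * t * ‖v‖ ^ 2 := by
      calc _ ≤ ‖gradient f (x + t • v) - gradient f x‖ * ‖v‖ := h1
        _ ≤ L * (t * ‖v‖) * ‖v‖ := by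
            exact mul_le_mul_of_nonneg_right h2 (norm_nonneg _)
        _ = L * t * ‖v‖ ^ 2 := by ring
    have := inner_sub_left (𝕜 := ℝ) (gradient f (x + t • v)) (gradient f x) v
    linarith [h3, this.symm.le, this.le]
  have hint : (∫ t in (0:ℝ)..1, ⟪gradient f (x + t • v), v⟫)
      ≤ ∫ t in (0:ℝ)..1, (⟪gradient f x, v⟫ + L * t * ‖v‖ ^ 2) := by
    apply intervalIntegral.integral_mono_on (by norm_num)
      (hcont.intervalIntegrable 0 1)
      (Continuous.intervalIntegrable (by fun_prop) 0 1)
    exact hbound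
  have hval : (∫ t in (0:ℝ)..1, (⟪gradient f x, v⟫ + L * t * ‖v‖ ^ 2))
      = ⟪gradient f x, v⟫ + L / 2 * ‖v‖ ^ 2 := by
    rw [intervalIntegral.integral_add ((continuous_const : Continuous fun _ : ℝ => ⟪gradient f x, v⟫).intervalIntegrable 0 1)
      (Continuous.intervalIntegrable (by fun_prop) 0 1)]
    simp only [intervalIntegral.integral_const, smul_eq_mul]
    have : (∫ t in (0:ℝ)..1, L * t * ‖v‖ ^ 2) = L * ‖v‖^2 * ∫ t in (0:ℝ)..1, t := by
      rw [← intervalIntegral.integral_const_mul]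
      congr 1; ext t; ring
    rw [this, integral_id]
    ring
  have : f y - f x ≤ ⟪gradient f x, v⟫ + L / 2 * ‖v‖ ^ 2 := by
    have h0 : f (x + (1:ℝ) • v) = f y := by simp [hv]
    have h1 : f (x + (0:ℝ) • v) = f x := by simp
    rw [h0, h1] at key
    rw [key]
    exact hint.trans hval.le
  linarith

/-- Sufficient decrease of a projected/proximal gradient step: if `f` has an
`L`-Lipschitz gradient, `c > L`, `x ∈ T`, and `x⁺ ∈ T` minimizes
`y ↦ (c/2)‖y − (x − (1/c)∇f(x))‖²` over the nonempty closed set `T`, then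
`f(x⁺) ≤ f(x) − ((c − L)/2)‖x⁺ − x‖²`. -/
theorem sufficient_decrease_prox_step (d : ℕ)
    (f : EuclideanSpace ℝ (Fin d) → ℝ) (hdiff : Differentiable ℝ f)
    (L : ℝ) (hL : 0 < L)
    (hlip : ∀ x y : EuclideanSpace ℝ (Fin d),
      ‖gradient f x - gradient f y‖ ≤ L * ‖x - y‖)
    (c : ℝ) (hc : L < c)
    (T : Set (EuclideanSpace ℝ (Fin d))) (hT : T.Nonempty) (hTc : IsClosed T)
    (x xp : EuclideanSpace ℝ (Fin d)) (hx : x ∈ T) (hxp : xp ∈ T)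
    (hmin : ∀ y ∈ T,
      c / 2 * ‖xp - (x - (1 / c) • gradient f x)‖ ^ 2
        ≤ c / 2 * ‖y - (x - (1 / c) • gradient f x)‖ ^ 2) :
    f xp ≤ f x - (c - L) / 2 * ‖xp - x‖ ^ 2 := by
  have hc0 : (0:ℝ) < c := hL.trans hc
  set g := gradient f x with hg
  set u := xp - x with hu
  have hdesc := descent_lemma f hdiff L hL.le hlip x xp
  -- optimality at y = x
  have hopt := hmin x hx
  have e1 : xp - (x - (1 / c) • g) = u + (1 / c) • g := by
    rw [hu]; abel
  have e2 : x - (x - (1 / c) • g) = (1 / c) • g := by abel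
  rw [e1, e2] at hopt
  have hns : ‖u + (1 / c) • g‖ ^ 2
      = ‖u‖ ^ 2 + 2 * ⟪u, (1 / c) • g⟫ + ‖(1 / c) • g‖ ^ 2 :=
    norm_add_sq_real u ((1 / c) • g)
  have hinner : ⟪u, (1 / c) • g⟫ = (1 / c) * ⟪g, u⟫ := by
    rw [real_inner_smul_right, real_inner_comm]
  have hcne : c ≠ 0 := ne_of_gt hc0
  have h2 : ‖u‖ ^ 2 + 2 * ((1 / c) * ⟪g, u⟫) ≤ 0 := by
    have := hopt
    rw [hns, hinner] at this
    nlinarith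
  have key : c / 2 * ‖u‖ ^ 2 + ⟪g, u⟫ ≤ 0 := by
    have h4 := mul_le_mul_of_nonneg_left h2 hc0.le
    have h5 : c * (‖u‖ ^ 2 + 2 * ((1 / c) * ⟪g, u⟫))
        = c * ‖u‖ ^ 2 + 2 * ⟪g, u⟫ := by
      field_simp
    rw [h5, mul_zero] at h4
    linarith
  linarith [hdesc]
end

section
/- Let v ∈ ℝ^d with ‖v‖₁ > l for some l > 0. Then the Euclidean projection of v onto the ℓ₁-ball {y : ‖y‖₁ ≤ l} is given by soft thresholding: there exists θ > 0 such that y*_i = sign(v_i)·max(|v_i| − θ, 0) for all i and ‖y*‖₁ = l, and this y* is the unique minimizer of ‖y − v‖² over the ball. -/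
lemma sign_sq_eq_one (w : ℝ) (hw : w ≠ 0) : Real.sign w * Real.sign w = 1 := by
  rcases lt_trichotomy w 0 with h | h | h
  · rw [Real.sign_of_neg h]; ring
  · exact absurd h hw
  · rw [Real.sign_of_pos h]; ring

lemma abs_sign_mul_max (θ w : ℝ) (hθ : 0 < θ) :
    |Real.sign w * max (|w| - θ) 0| = max (|w| - θ) 0 := by
  by_cases hw : w = 0
  · simp [hw, Real.sign_zero, max_eq_right (by linarith : -θ ≤ (0:ℝ))]
  · rcases lt_trichotomy w 0 with h | h | h
    · rw [Real.sign_of_neg h]; rw [abs_mul]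
      simp [abs_of_nonneg (le_max_right (|w| - θ) 0)]
    · exact absurd h hw
    · rw [Real.sign_of_pos h]; rw [abs_mul]
      simp [abs_of_nonneg (le_max_right (|w| - θ) 0)]

lemma soft_key (θ w t : ℝ) (hθ : 0 < θ) :
    (t - Real.sign w * max (|w| - θ) 0) * (w - Real.sign w * max (|w| - θ) 0)
      ≤ θ * (|t| - |Real.sign w * max (|w| - θ) 0|) := by
  rw [abs_sign_mul_max θ w hθ]
  rcases le_or_gt |w| θ with h | h
  · have hm : max (|w| - θ) 0 = 0 := max_eq_right (by linarith)
    rw [hm]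
    have h1 : t * w ≤ |t| * |w| := by
      calc t * w ≤ |t * w| := le_abs_self _
        _ = |t| * |w| := abs_mul t w
    nlinarith [abs_nonneg t]
  · have hw : w ≠ 0 := by
      intro h0; rw [h0] at h; simp at h; linarith
    have hs : Real.sign w * |w| = w := by
      rcases lt_trichotomy w 0 with hh | hh | hh
      · rw [Real.sign_of_neg hh, abs_of_neg hh]; ring
      · exact absurd hh hw
      · rw [Real.sign_of_pos hh, abs_of_pos hh]; ring
    have hs2 : Real.sign w * Real.sign w = 1 := sign_sq_eq_one w hw
    have hm : max (|w| - θ) 0 = |w| - θ := max_eq_left (by linarith)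
    rw [hm]
    have hw' : w - Real.sign w * (|w| - θ) = Real.sign w * θ := by
      rw [mul_sub]; linarith
    rw [hw']
    have h1 : Real.sign w * t ≤ |t| := by
      calc Real.sign w * t ≤ |Real.sign w * t| := le_abs_self _
        _ = |Real.sign w| * |t| := abs_mul _ _
        _ = 1 * |t| := by
            rcases lt_trichotomy w 0 with hh | hh | hh
            · rw [Real.sign_of_neg hh]; norm_num
            · exact absurd hh hw
            · rw [Real.sign_of_pos hh]; norm_num
        _ = |t| := one_mul _
    have e : (t - Real.sign w * (|w| - θ)) * (Real.sign w * θ)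
        = (Real.sign w * t) * θ - (Real.sign w * Real.sign w) * ((|w| - θ) * θ) := by
      ring
    rw [e, hs2]
    nlinarith [mul_le_mul_of_nonneg_left h1 hθ.le]

/-- Projection onto the `ℓ₁`-ball by soft thresholding: if `‖v‖₁ > l > 0`,
there is a threshold `θ > 0` such that the vector
`y*_i = sign(v_i) · max(|v_i| − θ, 0)` satisfies `‖y*‖₁ = l` and is the
unique minimizer of `‖y − v‖²` over the ball `{y : ‖y‖₁ ≤ l}`. -/
theorem l1_ball_projection_soft_thresholding (d : ℕ) (v : Fin d → ℝ)
    (l : ℝ) (hl : 0 < l) (hv : l < ∑ i, |v i|) :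
    ∃ θ : ℝ, 0 < θ ∧
      ∃ ystar : Fin d → ℝ,
        (∀ i, ystar i = Real.sign (v i) * max (|v i| - θ) 0) ∧
        (∑ i, |ystar i|) = l ∧
        (∀ y : Fin d → ℝ, (∑ i, |y i|) ≤ l →
          ∑ i, (ystar i - v i) ^ 2 ≤ ∑ i, (y i - v i) ^ 2) ∧
        (∀ y : Fin d → ℝ, (∑ i, |y i|) ≤ l → y ≠ ystar →
          ∑ i, (ystar i - v i) ^ 2 < ∑ i, (y i - v i) ^ 2) := by
  set M : ℝ := ∑ i, |v i| with hMdef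
  have hM : 0 < M := lt_trans hl hv
  set f : ℝ → ℝ := fun θ => ∑ i, max (|v i| - θ) 0 with hfdef
  have hfc : Continuous f := by
    apply continuous_finset_sum
    intro i _
    exact (continuous_const.sub continuous_id).max continuous_const
  have hf0 : f 0 = M := by
    simp only [hfdef, sub_zero]
    exact Finset.sum_congr rfl fun i _ => max_eq_left (abs_nonneg _)
  have hfM : f M = 0 := by
    apply Finset.sum_eq_zero
    intro i _
    have : |v i| ≤ M :=
      Finset.single_le_sum (fun j _ => abs_nonneg (v j)) (Finset.mem_univ i)
    exact max_eq_right (by linarith)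
  have hlmem : l ∈ Set.Icc (f M) (f 0) := by
    rw [hf0, hfM]; exact ⟨hl.le, hv.le⟩
  obtain ⟨θ, hθmem, hθeq⟩ :=
    intermediate_value_Icc' hM.le hfc.continuousOn hlmem
  have hθpos : 0 < θ := by
    rcases lt_or_eq_of_le hθmem.1 with h | h
    · exact h
    · exfalso; rw [← h] at hθeq; rw [hf0] at hθeq; linarith
  refine ⟨θ, hθpos, fun i => Real.sign (v i) * max (|v i| - θ) 0, fun i => rfl, ?_, ?_, ?_⟩
  · calc (∑ i, |Real.sign (v i) * max (|v i| - θ) 0|)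
        = ∑ i, max (|v i| - θ) 0 :=
          Finset.sum_congr rfl fun i _ => abs_sign_mul_max θ (v i) hθpos
      _ = l := hθeq
  all_goals {
    intro y hy
    have hsum : (∑ i, |Real.sign (v i) * max (|v i| - θ) 0|) = l := by
      calc (∑ i, |Real.sign (v i) * max (|v i| - θ) 0|)
          = ∑ i, max (|v i| - θ) 0 :=
            Finset.sum_congr rfl fun i _ => abs_sign_mul_max θ (v i) hθpos
        _ = l := hθeq
    have hcross : (∑ i, (y i - Real.sign (v i) * max (|v i| - θ) 0) *
        (v i - Real.sign (v i) * max (|v i| - θ) 0)) ≤ 0 := by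
      calc (∑ i, (y i - Real.sign (v i) * max (|v i| - θ) 0) *
            (v i - Real.sign (v i) * max (|v i| - θ) 0))
          ≤ ∑ i, θ * (|y i| - |Real.sign (v i) * max (|v i| - θ) 0|) :=
            Finset.sum_le_sum fun i _ => soft_key θ (v i) (y i) hθpos
        _ = θ * ((∑ i, |y i|) - ∑ i, |Real.sign (v i) * max (|v i| - θ) 0|) := by
            rw [mul_sub, Finset.mul_sum, Finset.mul_sum, ← Finset.sum_sub_distrib]
            exact Finset.sum_congr rfl fun i _ => mul_sub θ _ _
        _ ≤ 0 := by
            rw [hsum]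
            have : (∑ i, |y i|) - l ≤ 0 := by linarith
            nlinarith
    have hexp : (∑ i, (y i - v i) ^ 2)
        = (∑ i, (y i - Real.sign (v i) * max (|v i| - θ) 0) ^ 2)
          - 2 * (∑ i, (y i - Real.sign (v i) * max (|v i| - θ) 0) *
              (v i - Real.sign (v i) * max (|v i| - θ) 0))
          + ∑ i, (Real.sign (v i) * max (|v i| - θ) 0 - v i) ^ 2 := by
      rw [Finset.mul_sum, ← Finset.sum_sub_distrib, ← Finset.sum_add_distrib]
      exact Finset.sum_congr rfl fun i _ => by ring
    have hsqnn : (0:ℝ) ≤ ∑ i, (y i - Real.sign (v i) * max (|v i| - θ) 0) ^ 2 :=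
      Finset.sum_nonneg fun i _ => sq_nonneg _
    first
    | linarith
    | · intro hne
        have : ∃ i, y i ≠ Real.sign (v i) * max (|v i| - θ) 0 := by
          by_contra hc
          push_neg at hc
          exact hne (funext hc)
        obtain ⟨i, hi⟩ := this
        have hsqpos : (0:ℝ) < ∑ i, (y i - Real.sign (v i) * max (|v i| - θ) 0) ^ 2 :=
          Finset.sum_pos' (fun j _ => sq_nonneg _)
            ⟨i, Finset.mem_univ i, sq_pos_of_ne_zero (sub_ne_zero_of_ne hi)⟩
        linarith
  }
end
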